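/- arXiv:2009.08145 — 2 statements merged into one kernel-verified Lean document; each statement's English description precedes it below -/
import Mathlib

section
/- Let 𝔉 be a hereditary formation, G a finite group, R/S a normal section of G, and K a normal subgroup of G with K ≤ C_G(R/S) and [R/S](G/K) ∈ 𝔉. Then for every normal subgroup T of G with S ≤ T ≤ R, both [T/S](G/K) ∈ 𝔉 and [R/T](G/K) ∈ 𝔉. -/
/-- A class of finite groups. -/
def GroupClass : Type 1 :=
  ∀ (G : Type) [Group G] [Finite G], Prop

instance SemidirectProduct.instFinite {N G : Type*} [Group N] [Group G] [Finite N] [Finite G]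
    (φ : G →* MulAut N) : Finite (N ⋊[φ] G) :=
  Finite.of_injective (fun x => (x.left, x.right)) (by
    rintro ⟨a, b⟩ ⟨c, d⟩ h
    simpa [Prod.ext_iff, SemidirectProduct.ext_iff] using h)

/-- The `F`-residual of a finite group `G`. -/
def GroupClass.residual (F : GroupClass) (G : Type) [Group G] [Finite G] : Subgroup G :=
  sInf {N : Subgroup G | ∃ _ : N.Normal, F (G ⧸ N)}

/-- `F` is a formation. -/
structure GroupClass.IsFormation (F : GroupClass) : Prop where
  nonempty : ∃ (G : Type) (_ : Group G) (_ : Finite G), F G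
  isoClosed : ∀ (G H : Type) [Group G] [Finite G] [Group H] [Finite H],
    (G ≃* H) → F G → F H
  quot_residual_mem : ∀ (G : Type) [Group G] [Finite G] (N : Subgroup G) (_ : N.Normal),
    F.residual G ≤ N → F (G ⧸ N)

/-- `F` is hereditary (subgroup-closed). -/
def GroupClass.Hereditary (F : GroupClass) : Prop :=
  ∀ (G : Type) [Group G] [Finite G], F G → ∀ H : Subgroup G, F H

/-- `F` is saturated. -/
def GroupClass.Saturated (F : GroupClass) : Prop :=
  ∀ (G : Type) [Group G] [Finite G], F.residual G ≤ frattini G → F G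

section SectionMachinery

variable {G : Type} [Group G]

/-- conjugation by `g` preserves `S.subgroupOf R` when `R, S` are normal. -/
theorem conj_map_subgroupOf (R S : Subgroup G) [hR : R.Normal] [hS : S.Normal] (g : G) :
    (S.subgroupOf R).map ((MulAut.conjNormal g : MulAut R) : R →* R) = S.subgroupOf R := by
  ext x
  simp only [Subgroup.mem_map, Subgroup.mem_subgroupOf]
  constructor
  · rintro ⟨y, hy, rfl⟩
    simpa [MulAut.conjNormal_apply] using hS.conj_mem _ hy g
  · intro hx
    refine ⟨(MulAut.conjNormal g).symm x, ?_, by simp⟩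
    simp only [Subgroup.mem_subgroupOf, MulAut.conjNormal_symm_apply]
    simpa using hS.conj_mem _ hx g⁻¹

/-- The conjugation action of `G` on the normal section `R/S`. -/
def secAction (R S : Subgroup G) [R.Normal] [S.Normal] :
    G →* MulAut (R ⧸ S.subgroupOf R) where
  toFun g := QuotientGroup.congr (S.subgroupOf R) (S.subgroupOf R)
      (MulAut.conjNormal g) (conj_map_subgroupOf R S g)
  map_one' := by
    ext x
    induction x using QuotientGroup.induction_on with
    | H r => simp [QuotientGroup.congr_mk]
  map_mul' g₁ g₂ := by
    ext x
    induction x using QuotientGroup.induction_on with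
    | H r => simp [QuotientGroup.congr_mk, map_mul]

/-- The centraliser in `G` of the normal section `R/S`. -/
def secCentralizer (R S : Subgroup G) [R.Normal] [S.Normal] : Subgroup G :=
  (secAction R S).ker

instance secCentralizer.normal (R S : Subgroup G) [R.Normal] [S.Normal] :
    (secCentralizer R S).Normal := MonoidHom.normal_ker _

/-- The semidirect product `[R/S](G/K)` for a normal subgroup `K ≤ C_G(R/S)`. -/
abbrev secSDP (R S K : Subgroup G) [R.Normal] [S.Normal] [K.Normal]
    (hK : K ≤ secCentralizer R S) : Type :=
  (R ⧸ S.subgroupOf R) ⋊[QuotientGroup.lift K (secAction R S) (fun _ hx => hK hx)] (G ⧸ K)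

end SectionMachinery

/-- The normal section `R/S` of `G` is `F`-central in `G`. -/
def FCentralSection (F : GroupClass) {G : Type} [Group G] [Finite G]
    (R S : Subgroup G) [R.Normal] [S.Normal] : Prop :=
  ∃ (K : Subgroup G) (hK : K.Normal),
    haveI := hK
    ∃ hle : K ≤ secCentralizer R S, F (secSDP R S K hle)

/-- `H/K` is a chief factor of `G`. -/
def IsChiefFactor {G : Type} [Group G] (H K : Subgroup G) : Prop :=
  H.Normal ∧ K.Normal ∧ K < H ∧
    ∀ L : Subgroup G, L.Normal → K ≤ L → L ≤ H → L = K ∨ L = H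

/-- A normal subgroup `N` of `G` is `F`-hypercentral in `G`:
every chief factor of `G` below `N` is `F`-central in `G`. -/
def FHypercentralIn (F : GroupClass) {G : Type} [Group G] [Finite G] (N : Subgroup G) : Prop :=
  N.Normal ∧ ∀ H K : Subgroup G, ∀ hcf : IsChiefFactor H K, H ≤ N →
    @FCentralSection F G _ _ H K hcf.1 hcf.2.1

/-- The `F`-hypercentre of `G`: the product of all `F`-hypercentral normal subgroups. -/
def FHypercentre (F : GroupClass) (G : Type) [Group G] [Finite G] : Subgroup G :=
  ⨆ (N : Subgroup G) (_ : FHypercentralIn F N), N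

/-- `A` is `K`-`F`-subnormal in `G`. -/
def KFSubnormalIn (F : GroupClass) {G : Type} [Group G] [Finite G] (A : Subgroup G) : Prop :=
  ∃ (n : ℕ) (c : ℕ → Subgroup G), c 0 = A ∧ c n = ⊤ ∧
    ∀ i < n, c i ≤ c (i + 1) ∧
      (((c i).subgroupOf (c (i + 1))).Normal ∨
        F ((c (i + 1)) ⧸ ((c i).subgroupOf (c (i + 1))).normalCore))


section AuxLemmas

theorem GroupClass.IsFormation.mem_quot {F : GroupClass} (hF : F.IsFormation)
    {G : Type} [Group G] [Finite G] (hG : F G) (N : Subgroup G) [hN : N.Normal] :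
    F (G ⧸ N) := by
  refine hF.quot_residual_mem G N hN ?_
  have hbot : (⊥ : Subgroup G) ∈ {M : Subgroup G | ∃ _ : M.Normal, F (G ⧸ M)} :=
    ⟨inferInstance, hF.isoClosed G (G ⧸ (⊥ : Subgroup G)) (QuotientGroup.quotientBot (G := G)).symm hG⟩
  exact le_trans (sInf_le hbot) bot_le

theorem mem_of_injective {F : GroupClass} (hF : F.IsFormation) (hHer : F.Hereditary)
    {A B : Type} [Group A] [Finite A] [Group B] [Finite B]
    (f : A →* B) (hf : Function.Injective f) (hB : F B) : F A :=
  hF.isoClosed _ _ (MonoidHom.ofInjective hf).symm (hHer B hB f.range)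

theorem mem_of_surjective {F : GroupClass} (hF : F.IsFormation)
    {A B : Type} [Group A] [Finite A] [Group B] [Finite B]
    (f : A →* B) (hf : Function.Surjective f) (hA : F A) : F B :=
  hF.isoClosed _ _ (QuotientGroup.quotientKerEquivOfSurjective f hf)
    (hF.mem_quot hA f.ker)

variable {G : Type} [Group G]

theorem mem_secCentralizer_iff (R S : Subgroup G) [R.Normal] [S.Normal] (g : G) :
    g ∈ secCentralizer R S ↔
      ∀ r : R, (QuotientGroup.mk (MulAut.conjNormal g r) : R ⧸ S.subgroupOf R)
        = QuotientGroup.mk r := by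
  rw [secCentralizer, MonoidHom.mem_ker]
  constructor
  · intro h r
    have := DFunLike.ext_iff.1 h (QuotientGroup.mk r)
    simpa [secAction, QuotientGroup.congr_mk] using this
  · intro h
    ext x
    induction x using QuotientGroup.induction_on with
    | H r => simpa [secAction, QuotientGroup.congr_mk] using h r

end AuxLemmas

/-- **Lemma 2(iii).** Let `𝔉` be a hereditary formation, `R/S` a normal section of the
finite group `G`, and `K` a normal subgroup of `G` with `K ≤ C_G(R/S)` and
`[R/S](G/K) ∈ 𝔉`. Then for every normal subgroup `T` of `G` with `S ≤ T ≤ R`, both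
`[T/S](G/K) ∈ 𝔉` and `[R/T](G/K) ∈ 𝔉`. -/
theorem secSDP_mem_of_intermediate
    (F : GroupClass) (hF : F.IsFormation) (hHer : F.Hereditary)
    {G : Type} [Group G] [Finite G]
    (R S K : Subgroup G) [R.Normal] [S.Normal] [K.Normal]
    (hSR : S ≤ R) (hKC : K ≤ secCentralizer R S)
    (hmem : F (secSDP R S K hKC))
    (T : Subgroup G) [T.Normal] (hST : S ≤ T) (hTR : T ≤ R) :
    (∃ h₁ : K ≤ secCentralizer T S, F (secSDP T S K h₁)) ∧
      (∃ h₂ : K ≤ secCentralizer R T, F (secSDP R T K h₂)) := by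
  -- the key pointwise consequence of `hKC`
  have key : ∀ k ∈ K, ∀ r : G, r ∈ R → (k * r * k⁻¹)⁻¹ * r ∈ S := by
    intro k hk r hr
    have := (mem_secCentralizer_iff R S k).1 (hKC hk) ⟨r, hr⟩
    rw [QuotientGroup.eq] at this
    simpa [Subgroup.mem_subgroupOf, MulAut.conjNormal_apply] using this
  have h₁ : K ≤ secCentralizer T S := by
    intro k hk
    rw [mem_secCentralizer_iff]
    intro t
    rw [QuotientGroup.eq]
    simpa [Subgroup.mem_subgroupOf, MulAut.conjNormal_apply] using
      key k hk t (hTR t.2)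
  have h₂ : K ≤ secCentralizer R T := by
    intro k hk
    rw [mem_secCentralizer_iff]
    intro r
    rw [QuotientGroup.eq]
    simpa [Subgroup.mem_subgroupOf, MulAut.conjNormal_apply] using
      hST (key k hk r r.2)
  constructor
  · -- `[T/S](G/K) ∈ F` : embed it into `[R/S](G/K)`
    refine ⟨h₁, ?_⟩
    have hcomap : S.subgroupOf T ≤ (S.subgroupOf R).comap (Subgroup.inclusion hTR) := by
      intro x hx
      simpa [Subgroup.mem_comap, Subgroup.mem_subgroupOf] using hx
    set f₁ : (T ⧸ S.subgroupOf T) →* (R ⧸ S.subgroupOf R) :=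
      QuotientGroup.map (S.subgroupOf T) (S.subgroupOf R) (Subgroup.inclusion hTR) hcomap
      with hf₁
    have hf₁inj : Function.Injective f₁ := by
      rw [injective_iff_map_eq_one]
      intro x hx
      induction x using QuotientGroup.induction_on with
      | H t =>
        rw [hf₁, QuotientGroup.map_mk, QuotientGroup.eq_one_iff] at hx
        rw [QuotientGroup.eq_one_iff]
        simpa [Subgroup.mem_subgroupOf] using hx
    have hcompat : ∀ g : G ⧸ K,
        f₁.comp ((QuotientGroup.lift K (secAction T S) (fun _ hx => h₁ hx)) g).toMonoidHom
          = ((QuotientGroup.lift K (secAction R S) (fun _ hx => hKC hx))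
              ((MonoidHom.id (G ⧸ K)) g)).toMonoidHom.comp f₁ := by
      intro g
      induction g using QuotientGroup.induction_on with
      | H g =>
        ext t
        simp only [MonoidHom.id_apply, QuotientGroup.lift_mk, MonoidHom.comp_apply,
          MulEquiv.coe_toMonoidHom, secAction, MonoidHom.coe_mk, OneHom.coe_mk,
          QuotientGroup.mk'_apply, QuotientGroup.congr_mk, hf₁, QuotientGroup.map_mk]
        congr 1
    exact mem_of_injective hF hHer
      (SemidirectProduct.map f₁ (MonoidHom.id (G ⧸ K)) hcompat)
      (fun x y hxy => by
        have hl := congrArg SemidirectProduct.left hxy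
        have hr := congrArg SemidirectProduct.right hxy
        simp only [SemidirectProduct.map_left, SemidirectProduct.map_right,
          MonoidHom.id_apply] at hl hr
        exact SemidirectProduct.ext (hf₁inj hl) hr) hmem
  · -- `[R/T](G/K) ∈ F` : it is a quotient of `[R/S](G/K)`
    refine ⟨h₂, ?_⟩
    have hcomap : S.subgroupOf R ≤ (T.subgroupOf R).comap (MonoidHom.id R) := by
      intro x hx
      simpa [Subgroup.mem_comap, Subgroup.mem_subgroupOf] using
        hST (by simpa [Subgroup.mem_subgroupOf] using hx)
    set f₁ : (R ⧸ S.subgroupOf R) →* (R ⧸ T.subgroupOf R) :=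
      QuotientGroup.map (S.subgroupOf R) (T.subgroupOf R) (MonoidHom.id R) hcomap
      with hf₁
    have hf₁surj : Function.Surjective f₁ := by
      intro x
      induction x using QuotientGroup.induction_on with
      | H r => exact ⟨QuotientGroup.mk r, by simp [hf₁, QuotientGroup.map_mk]⟩
    have hcompat : ∀ g : G ⧸ K,
        f₁.comp ((QuotientGroup.lift K (secAction R S) (fun _ hx => hKC hx)) g).toMonoidHom
          = ((QuotientGroup.lift K (secAction R T) (fun _ hx => h₂ hx))
              ((MonoidHom.id (G ⧸ K)) g)).toMonoidHom.comp f₁ := by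
      intro g
      induction g using QuotientGroup.induction_on with
      | H g =>
        ext r
        simp only [MonoidHom.id_apply, QuotientGroup.lift_mk, MonoidHom.comp_apply,
          MulEquiv.coe_toMonoidHom, secAction, MonoidHom.coe_mk, OneHom.coe_mk,
          QuotientGroup.mk'_apply, QuotientGroup.congr_mk, hf₁, QuotientGroup.map_mk]
    exact mem_of_surjective hF
      (SemidirectProduct.map f₁ (MonoidHom.id (G ⧸ K)) hcompat)
      (fun x => by
        obtain ⟨n, hn⟩ := hf₁surj x.left
        exact ⟨⟨n, x.right⟩, SemidirectProduct.ext (by simp [hn]) rfl⟩) hmem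
end

section
/- Let 𝔉 be a hereditary formation, G a finite group, and A and B subgroups of G. Then Z_𝔉(B) ∩ A ≤ Z_𝔉(B ∩ A). -/
namespace GroupClass.IsFormation

variable {F : GroupClass}

theorem quotient_mem (hF : F.IsFormation) {G : Type} [Group G] [Finite G] (hG : F G)
    (N : Subgroup G) [N.Normal] : F (G ⧸ N) := by
  refine hF.quot_residual_mem G N inferInstance (le_trans (sInf_le ?_) bot_le)
  exact ⟨inferInstance, hF.isoClosed G _ QuotientGroup.quotientBot.symm hG⟩

/-- `T` is a quotient of `X ⧸ Φ.ker`, which embeds in `S`. -/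
theorem mem_of_ker_le (hF : F.IsFormation) (hHer : F.Hereditary)
    {S T X : Type} [Group S] [Finite S] [Group T] [Finite T] [Group X] [Finite X]
    (hS : F S) (Φ : X →* S) {Ψ : X →* T} (hΨ : Function.Surjective Ψ)
    (hker : Φ.ker ≤ Ψ.ker) : F T := by
  have hX : F (X ⧸ Φ.ker) :=
    hF.isoClosed _ _ (QuotientGroup.quotientKerEquivRange Φ).symm (hHer S hS Φ.range)
  let q : X ⧸ Φ.ker →* T := QuotientGroup.lift Φ.ker Ψ hker
  have hq : Function.Surjective q := by
    intro t
    obtain ⟨x, rfl⟩ := hΨ t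
    exact ⟨x, rfl⟩
  exact hF.isoClosed _ _ (QuotientGroup.quotientKerEquivOfSurjective q hq)
    (hF.quotient_mem hX q.ker)

end GroupClass.IsFormation

section SecSDPMap

variable {H G : Type} [Group H] [Group G] {R S : Subgroup G} [R.Normal] [S.Normal]

theorem secAction_mk (g : G) (r : R) :
    secAction R S g (r : R ⧸ S.subgroupOf R) = (MulAut.conjNormal g r : R ⧸ S.subgroupOf R) := by
  simp [secAction, QuotientGroup.congr_mk]

theorem mem_secCentralizer_iff_s13 {g : G} :
    g ∈ secCentralizer R S ↔ ∀ r ∈ R, g * r * g⁻¹ * r⁻¹ ∈ S := by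
  have key : ∀ r : R, secAction R S g (r : R ⧸ S.subgroupOf R) = r ↔
      g * r * g⁻¹ * (r : G)⁻¹ ∈ S := fun r => by
    rw [secAction_mk, QuotientGroup.eq, Subgroup.mem_subgroupOf, Subgroup.coe_mul,
      Subgroup.coe_inv, ← inv_mem_iff, mul_inv_rev, inv_inv,
      (inferInstance : S.Normal).mem_comm_iff]
    rfl
  rw [secCentralizer, MonoidHom.mem_ker, MulEquiv.ext_iff]
  refine ⟨fun h r hr => (key ⟨r, hr⟩).1 (h _), fun h x => ?_⟩
  induction x using QuotientGroup.induction_on with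
  | H r => exact (key r).2 (h r r.2)

def secSDPMap (φ : H →* G) (T : Subgroup H) [T.Normal] (hT : T ≤ R.comap φ)
    (K : Subgroup G) [K.Normal] (hK : K ≤ secCentralizer R S) :
    T ⋊[MulAut.conjNormal] H →* secSDP R S K hK :=
  SemidirectProduct.map
    ((QuotientGroup.mk' _).comp ((φ.comp T.subtype).codRestrict R fun t => hT t.2))
    ((QuotientGroup.mk' K).comp φ) fun h => by
      ext t
      change QuotientGroup.mk _ = secAction R S (φ h) (QuotientGroup.mk _)
      rw [secAction_mk]
      congr 1
      ext
      change φ (h * t * h⁻¹) = φ h * φ t * (φ h)⁻¹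
      simp

theorem mem_ker_secSDPMap {φ : H →* G} {T : Subgroup H} [T.Normal] {hT : T ≤ R.comap φ}
    {K : Subgroup G} [K.Normal] {hK : K ≤ secCentralizer R S} {x : T ⋊[MulAut.conjNormal] H} :
    x ∈ (secSDPMap φ T hT K hK).ker ↔ φ x.left ∈ S ∧ φ x.right ∈ K := by
  rw [MonoidHom.mem_ker, SemidirectProduct.ext_iff]
  exact and_congr (QuotientGroup.eq_one_iff _) (QuotientGroup.eq_one_iff _)

theorem secSDPMap_id_surjective {R S T : Subgroup H} [R.Normal] [S.Normal] [T.Normal]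
    (hTR : T ≤ R) (hR : R ≤ T ⊔ S) {K : Subgroup H} [K.Normal] {hK : K ≤ secCentralizer R S} :
    Function.Surjective (secSDPMap (MonoidHom.id H) T hTR K hK) := by
  rintro ⟨a, b⟩
  obtain ⟨r, rfl⟩ := QuotientGroup.mk_surjective a
  obtain ⟨h, rfl⟩ := QuotientGroup.mk_surjective b
  obtain ⟨t, ht, s, hs, hts⟩ := Subgroup.mem_sup_of_normal_right.1 (hR r.2)
  refine ⟨⟨⟨t, ht⟩, h⟩, SemidirectProduct.ext ?_ rfl⟩
  refine QuotientGroup.eq.2 (Subgroup.mem_subgroupOf.2 ?_)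
  simpa [← hts] using hs

end SecSDPMap

section Transfer

variable {F : GroupClass} {H G : Type} [Group H] [Group G] {R S : Subgroup G} [R.Normal] [S.Normal]

theorem mem_secCentralizer_of_map_mem (φ : H →* G) {R' S' T : Subgroup H} [R'.Normal]
    [hS' : S'.Normal] [hT : T.Normal] (hTR : T ≤ R.comap φ) (hR' : R' ≤ T ⊔ S')
    (hTS : T ⊓ S.comap φ ≤ S') {h : H} (hh : φ h ∈ secCentralizer R S) : h ∈ secCentralizer R' S' := by
  have hcomm : ∀ t ∈ T, h * t * h⁻¹ * t⁻¹ ∈ S' := fun t ht =>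
    hTS ⟨T.mul_mem (hT.conj_mem t ht h) (T.inv_mem ht),
      by simpa using mem_secCentralizer_iff_s13.1 hh (φ t) (hTR ht)⟩
  rw [mem_secCentralizer_iff_s13]
  intro r hr
  obtain ⟨t, ht, s, hs, rfl⟩ := Subgroup.mem_sup_of_normal_right.1 (hR' hr)
  have : h * (t * s) * h⁻¹ * (t * s)⁻¹ =
      (h * t * h⁻¹ * t⁻¹) * (t * (h * s * h⁻¹ * s⁻¹) * t⁻¹) := by group
  rw [this]
  exact S'.mul_mem (hcomm t ht)
    (hS'.conj_mem _ (S'.mul_mem (hS'.conj_mem s hs h) (S'.inv_mem hs)) t)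

/-- `[R'/S'](H/C_H(R'/S'))` is a quotient of `T ⋊ H`, which maps to `[R/S](G/K)` with a
smaller kernel. -/
theorem FCentralSection.of_hom (hF : F.IsFormation) (hHer : F.Hereditary) [Finite H] [Finite G]
    (φ : H →* G) (h : FCentralSection F R S) {R' S' T : Subgroup H} [R'.Normal] [S'.Normal]
    [T.Normal] (hTR' : T ≤ R') (hTR : T ≤ R.comap φ) (hR' : R' ≤ T ⊔ S')
    (hTS : T ⊓ S.comap φ ≤ S') : FCentralSection F R' S' := by
  obtain ⟨K, hK, hKC, hFK⟩ := h
  refine ⟨secCentralizer R' S', inferInstance, le_rfl,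
    hF.mem_of_ker_le hHer hFK (secSDPMap φ T hTR K hKC) (secSDPMap_id_surjective hTR' hR') ?_⟩
  intro x hx
  rw [mem_ker_secSDPMap] at hx
  exact mem_ker_secSDPMap.2
    ⟨hTS ⟨x.left.2, hx.1⟩, mem_secCentralizer_of_map_mem φ hTR hR' hTS (hKC hx.2)⟩

end Transfer

section ChiefFactor

variable {G : Type} [Group G] [Finite G]

theorem exists_isChiefFactor_of_ne_bot {Z : Subgroup G} [hZ : Z.Normal] (hZbot : Z ≠ ⊥) :
    ∃ M < Z, IsChiefFactor Z M := by
  obtain ⟨M, ⟨hMn, hMZ⟩, hmax⟩ := exists_maximal_of_wellFoundedGT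
    (fun M : Subgroup G => M.Normal ∧ M < Z) ⟨⊥, inferInstance, bot_lt_iff_ne_bot.2 hZbot⟩
  refine ⟨M, hMZ, hZ, hMn, hMZ, fun L hL hML hLZ => ?_⟩
  by_cases hLZ' : L = Z
  · exact Or.inr hLZ'
  · exact Or.inl (le_antisymm (hmax ⟨hL, lt_of_le_of_ne hLZ hLZ'⟩ hML) hML)

/-- Take `L` minimal among the normal subgroups of `G` below `D` with `V ⊔ L = U`. -/
theorem IsChiefFactor.exists_isChiefFactor_inf {U V D : Subgroup G} (hcf : IsChiefFactor U V)
    (hD : D.Normal) (hVD : V ⊔ D = U) : ∃ L ≤ D, IsChiefFactor L (V ⊓ L) ∧ V ⊔ L = U := by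
  obtain ⟨hU, hV, hVU, hchief⟩ := hcf
  obtain ⟨L, hLD, ⟨hL, -, hVL⟩, hmin⟩ := exists_minimal_le_of_wellFoundedLT
    (fun L : Subgroup G => L.Normal ∧ L ≤ D ∧ V ⊔ L = U) D ⟨hD, le_rfl, hVD⟩
  have hLU : L ≤ U := hVL ▸ le_sup_right
  refine ⟨L, hLD, ⟨hL, Subgroup.normal_inf_normal V L, inf_lt_right.2 fun hLV => ?_,
    fun L₁ hL₁ hVL₁ hL₁L => ?_⟩, hVL⟩
  · exact hVU.ne (by rwa [sup_eq_left.2 hLV] at hVL)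
  · rcases hchief (V ⊔ L₁) (Subgroup.sup_normal V L₁) le_sup_left
      (sup_le hVU.le (hL₁L.trans hLU)) with h | h
    · exact Or.inl (le_antisymm (le_inf (h ▸ le_sup_right) hL₁L) hVL₁)
    · exact Or.inr (le_antisymm hL₁L (hmin ⟨hL₁, hL₁L.trans hLD, h⟩ hL₁L))

end ChiefFactor

section Hypercentral

variable {F : GroupClass} {H G : Type} [Group H] [Group G] [Finite H] [Finite G]

theorem FHypercentralIn.bot : FHypercentralIn F (⊥ : Subgroup G) :=
  ⟨inferInstance, fun _ _ hcf hU => absurd (hcf.2.2.1.trans_le hU) not_lt_bot⟩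

theorem FHypercentralIn.mono {Z M : Subgroup G} (hZ : FHypercentralIn F Z) [hM : M.Normal]
    (hMZ : M ≤ Z) : FHypercentralIn F M :=
  ⟨hM, fun U V hcf hU => hZ.2 U V hcf (hU.trans hMZ)⟩

/-- `U/V` is `H`-isomorphic to `UW/VW`, a section of `W φ⁻¹(Z) / W`, and is therefore reached
from `Z/M` in two steps of `FCentralSection.of_hom`. -/
theorem FCentralSection.of_le_sup_comap (hF : F.IsFormation) (hHer : F.Hereditary)
    (φ : H →* G) {Z M : Subgroup G} [Z.Normal] [M.Normal] (hZM : FCentralSection F Z M)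
    {U V W : Subgroup H} [U.Normal] [V.Normal] [W.Normal] (hVU : V ≤ U)
    (hU : U ≤ W ⊔ Z.comap φ) (hUW : U ⊓ W ≤ V) (hMW : M.comap φ ≤ W) :
    FCentralSection F U V := by
  have hsup : FCentralSection F (U ⊔ W) (V ⊔ W) := by
    refine hZM.of_hom hF hHer φ (T := (U ⊔ W) ⊓ Z.comap φ) inf_le_left inf_le_right ?_
      (inf_le_right.trans (hMW.trans le_sup_right))
    intro x hx
    obtain ⟨w, hw, z, hz, rfl⟩ := Subgroup.mem_sup_of_normal_left.1 (sup_le hU le_sup_left hx)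
    have hzUW : z ∈ U ⊔ W := by
      simpa using (U ⊔ W).mul_mem ((U ⊔ W).inv_mem (Subgroup.mem_sup_right hw)) hx
    exact Subgroup.mul_mem _ (Subgroup.mem_sup_right (Subgroup.mem_sup_right hw))
      (Subgroup.mem_sup_left ⟨hzUW, hz⟩)
  refine hsup.of_hom hF hHer (MonoidHom.id H) (T := U) le_rfl le_sup_left le_sup_left ?_
  rintro x ⟨hxU, hx⟩
  obtain ⟨v, hv, w, hw, rfl⟩ := Subgroup.mem_sup_of_normal_right.1 hx
  have hwU : w ∈ U := by simpa using U.mul_mem (U.inv_mem (hVU hv)) hxU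
  exact V.mul_mem hv (hUW ⟨hwU, hw⟩)

theorem FHypercentralIn.fCentralSection_of_le_sup_comap (hF : F.IsFormation)
    (hHer : F.Hereditary) {φ : H →* G} (hφ : Function.Injective φ) {Y : Subgroup H}
    (hY : FHypercentralIn F Y) {Z : Subgroup G} (hZ : FHypercentralIn F Z) {U V : Subgroup H}
    (hcf : IsChiefFactor U V) (hU : U ≤ Y ⊔ Z.comap φ) :
    @FCentralSection F H _ _ U V hcf.1 hcf.2.1 := by
  induction Z using WellFoundedLT.induction generalizing U V with
  | _ Z ih =>
  have := hcf.1
  have := hcf.2.1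
  have := hY.1
  have := hZ.1
  by_cases hZbot : Z = ⊥
  · subst hZbot
    rw [MonoidHom.comap_bot, (MonoidHom.ker_eq_bot_iff φ).2 hφ, sup_bot_eq] at hU
    exact hY.2 U V hcf hU
  obtain ⟨M, hMZ, hcfZ⟩ := exists_isChiefFactor_of_ne_bot hZbot
  have := hcfZ.2.1
  rcases hcf.2.2.2 (V ⊔ U ⊓ (Y ⊔ M.comap φ)) inferInstance le_sup_left
      (sup_le hcf.2.2.1.le inf_le_left) with hV | hV
  · refine (hZ.2 Z M hcfZ le_rfl).of_le_sup_comap hF hHer φ hcf.2.2.1.le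
      (hU.trans (sup_le_sup_right le_sup_left _)) (hV ▸ le_sup_right) le_sup_right
  · obtain ⟨L, hLW, hcfL, hVL⟩ := hcf.exists_isChiefFactor_inf inferInstance hV
    have := hcfL.1
    exact (ih M hMZ (hZ.mono hMZ.le) hcfL (hLW.trans inf_le_right)).of_hom hF hHer
      (MonoidHom.id H) (T := L) (hVL ▸ le_sup_right) le_rfl (hVL ▸ le_of_eq (sup_comm _ _))
      fun _ hx => hx.2.1

theorem FHypercentralIn.sup (hF : F.IsFormation) (hHer : F.Hereditary) {N M : Subgroup G}
    (hN : FHypercentralIn F N) (hM : FHypercentralIn F M) : FHypercentralIn F (N ⊔ M) := by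
  have := hN.1
  have := hM.1
  exact ⟨inferInstance, fun U V hcf hU => hN.fCentralSection_of_le_sup_comap hF hHer
    Function.injective_id hM hcf (by rwa [Subgroup.comap_id])⟩

theorem FHypercentralIn.comap (hF : F.IsFormation) (hHer : F.Hereditary) {φ : H →* G}
    (hφ : Function.Injective φ) {Z : Subgroup G} (hZ : FHypercentralIn F Z) :
    FHypercentralIn F (Z.comap φ) := by
  have := hZ.1
  exact ⟨inferInstance, fun U V hcf hU => FHypercentralIn.bot.fCentralSection_of_le_sup_comap
    hF hHer hφ hZ hcf (by rwa [bot_sup_eq])⟩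

theorem FHypercentralIn.le_fHypercentre {N : Subgroup G} (hN : FHypercentralIn F N) :
    N ≤ FHypercentre F G :=
  le_iSup₂ (f := fun N (_ : FHypercentralIn F N) => N) N hN

theorem fHypercentralIn_fHypercentre (hF : F.IsFormation) (hHer : F.Hereditary) :
    FHypercentralIn F (FHypercentre F G) :=
  SupClosed.biSup_mem (s := {N | FHypercentralIn F N}) (t := {N | FHypercentralIn F N})
    (f := id) (fun _ hN _ hM => hN.sup hF hHer hM) (Set.toFinite _) FHypercentralIn.bot
    fun _ hN => hN

end Hypercentral

/-- **Lemma 4(iii).** Let `𝔉` be a hereditary formation and `A`, `B` subgroups of the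
finite group `G`. Then `Z_𝔉(B) ∩ A ≤ Z_𝔉(B ∩ A)`. -/
theorem FHypercentre_inf_le
    (F : GroupClass) (hF : F.IsFormation) (hHer : F.Hereditary)
    {G : Type} [Group G] [Finite G] (A B : Subgroup G) :
    (FHypercentre F ↥B).map B.subtype ⊓ A ≤
      (FHypercentre F ↥(B ⊓ A)).map (B ⊓ A).subtype := by
  have hle : (FHypercentre F B).comap (Subgroup.inclusion inf_le_left) ≤
      FHypercentre F ↥(B ⊓ A) :=
    ((fHypercentralIn_fHypercentre hF hHer).comap hF hHer
      (Subgroup.inclusion_injective _)).le_fHypercentre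
  rintro _ ⟨⟨b, hb, rfl⟩, hbA⟩
  exact ⟨⟨b, b.2, hbA⟩, hle hb, rfl⟩
end
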